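/- arXiv:2006.15856 — 7 statements merged into one kernel-verified Lean document; each statement's English description precedes it below -/
import Mathlib

section
/- The function h_b(n) := Σ_{j=1}^{n} (j,n)_b satisfies the convolution identity h_b(n) = Σ_{d^b | n} d · φ_b(n/d^b), where φ_b(m) := #{k ≤ m : (k,m)_b = 1} is Klee's totient. -/
/-!
Sort the `j ≤ n` by the value `d = (j,n)_b`. Since `(k c^b, m c^b)_b = c (k,m)_b`, the `j` with
`(j,n)_b = d` are exactly the `k d^b` with `(k, n/d^b)_b = 1`, so this fiber has `φ_b(n/d^b)`
elements. The scaling rule comes from `d ∣ (r,s)_b ↔ d^b ∣ r ∧ d^b ∣ s`, which holds because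
`lcm(e,d)^b = lcm(e^b,d^b)`: the `d` with `d^b ∣ r, s` are closed under `lcm`, so their maximum
is a multiple of all of them.
-/

/-- The generalized gcd: the largest `d ≥ 1` with `d^b ∣ r` and `d^b ∣ s`. -/
noncomputable def ggcd (b r s : ℕ) : ℕ := sSup {d : ℕ | 0 < d ∧ d ^ b ∣ r ∧ d ^ b ∣ s}

/-- The generalized gcd-sum function `h_b(n) = ∑_{j ≤ n} (j,n)_b`. -/
noncomputable def hgcd (b n : ℕ) : ℕ := ∑ j ∈ Finset.Icc 1 n, ggcd b j n

/-- Klee's totient `φ_b(n) = #{1 ≤ k ≤ n : (k,n)_b = 1}`. -/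
noncomputable def klee (b n : ℕ) : ℕ :=
  ((Finset.Icc 1 n).filter (fun k => ggcd b k n = 1)).card

open Finset

section ggcd

variable {b r s : ℕ}

lemma bddAbove_ggcd_set (hb : 0 < b) (hs : 0 < s) :
    BddAbove {d : ℕ | 0 < d ∧ d ^ b ∣ r ∧ d ^ b ∣ s} :=
  ⟨s, fun d hd => (Nat.le_self_pow hb.ne' d).trans (Nat.le_of_dvd hs hd.2.2)⟩

lemma ggcd_spec (hb : 0 < b) (hs : 0 < s) :
    0 < ggcd b r s ∧ ggcd b r s ^ b ∣ r ∧ ggcd b r s ^ b ∣ s :=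
  Nat.sSup_mem ⟨1, by simp⟩ (bddAbove_ggcd_set hb hs)

lemma le_ggcd (hb : 0 < b) (hs : 0 < s) {d : ℕ} (hd : 0 < d) (hdr : d ^ b ∣ r)
    (hds : d ^ b ∣ s) : d ≤ ggcd b r s :=
  le_csSup (bddAbove_ggcd_set hb hs) ⟨hd, hdr, hds⟩

lemma ggcd_le_right (hb : 0 < b) (hs : 0 < s) : ggcd b r s ≤ s :=
  (Nat.le_self_pow hb.ne' _).trans (Nat.le_of_dvd hs (ggcd_spec hb hs).2.2)

lemma dvd_ggcd_iff (hb : 0 < b) (hs : 0 < s) {d : ℕ} (hd : 0 < d) :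
    d ∣ ggcd b r s ↔ d ^ b ∣ r ∧ d ^ b ∣ s := by
  obtain ⟨he, her, hes⟩ := ggcd_spec (r := r) hb hs
  constructor
  · intro hde
    exact ⟨(pow_dvd_pow_of_dvd hde b).trans her, (pow_dvd_pow_of_dvd hde b).trans hes⟩
  · rintro ⟨hdr, hds⟩
    set e := ggcd b r s
    have hlcm : 0 < Nat.lcm e d := Nat.lcm_pos he hd
    have hle : Nat.lcm e d ≤ e :=
      le_ggcd hb hs hlcm (Nat.pow_lcm_pow ▸ Nat.lcm_dvd her hdr)
        (Nat.pow_lcm_pow ▸ Nat.lcm_dvd hes hds)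
    have heq : Nat.lcm e d = e :=
      le_antisymm hle (Nat.le_of_dvd hlcm (Nat.dvd_lcm_left e d))
    exact heq ▸ Nat.dvd_lcm_right e d

lemma ggcd_mul_pow (hb : 0 < b) (hs : 0 < s) {c : ℕ} (hc : 0 < c) :
    ggcd b (r * c ^ b) (s * c ^ b) = ggcd b r s * c := by
  have hcb : 0 < c ^ b := pow_pos hc b
  have hsc : 0 < s * c ^ b := Nat.mul_pos hs hcb
  obtain ⟨hg, hgr, hgs⟩ := ggcd_spec (r := r) hb hs
  refine le_antisymm ?_ ?_
  · obtain ⟨f, hf⟩ : c ∣ ggcd b (r * c ^ b) (s * c ^ b) :=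
      (dvd_ggcd_iff hb hsc hc).2 ⟨dvd_mul_left _ _, dvd_mul_left _ _⟩
    obtain ⟨hcf, hcfr, hcfs⟩ := hf ▸ ggcd_spec (r := r * c ^ b) hb hsc
    rw [mul_pow, mul_comm, Nat.mul_dvd_mul_iff_right hcb] at hcfr hcfs
    rw [hf, mul_comm]
    exact Nat.mul_le_mul_right c (le_ggcd hb hs (Nat.pos_of_mul_pos_left hcf) hcfr hcfs)
  · exact le_ggcd hb hsc (Nat.mul_pos hg hc) (mul_pow (ggcd b r s) c b ▸ mul_dvd_mul_right hgr _)
      (mul_pow (ggcd b r s) c b ▸ mul_dvd_mul_right hgs _)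

end ggcd

lemma card_filter_ggcd_eq {b m d : ℕ} (hb : 0 < b) (hd : 0 < d) :
    #{j ∈ Icc 1 (m * d ^ b) | ggcd b j (m * d ^ b) = d} = klee b m := by
  have hdb : 0 < d ^ b := pow_pos hd b
  symm
  apply card_nbij (· * d ^ b)
  · intro k hk
    simp only [mem_coe, mem_filter, mem_Icc] at hk ⊢
    obtain ⟨⟨hk1, hkm⟩, hkg⟩ := hk
    refine ⟨⟨Nat.one_le_iff_ne_zero.2 (Nat.mul_pos hk1 hdb).ne', Nat.mul_le_mul_right _ hkm⟩, ?_⟩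
    rw [ggcd_mul_pow hb (by omega) hd, hkg, one_mul]
  · exact fun k _ l _ hkl => Nat.eq_of_mul_eq_mul_right hdb hkl
  · intro j hj
    simp only [mem_coe, mem_filter, mem_Icc, Set.mem_image] at hj ⊢
    obtain ⟨⟨hj1, hjn⟩, hjg⟩ := hj
    have hm : 0 < m := Nat.pos_of_mul_pos_right (by omega : 0 < m * d ^ b)
    obtain ⟨k, rfl⟩ : d ^ b ∣ j := hjg ▸ (ggcd_spec hb (Nat.mul_pos hm hdb)).2.1
    rw [mul_comm, ggcd_mul_pow hb hm hd, Nat.mul_eq_right hd.ne'] at hjg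
    rw [mul_comm m] at hjn
    exact ⟨k, ⟨⟨Nat.pos_of_mul_pos_left hj1, Nat.le_of_mul_le_mul_left hjn hdb⟩, hjg⟩, mul_comm _ _⟩

theorem hgcd_eq_sum_klee_general (b n : ℕ) (hb : 2 ≤ b) :
    hgcd b n = ∑ d ∈ (Finset.Icc 1 n).filter (fun d => d ^ b ∣ n),
      d * klee b (n / d ^ b) := by
  have hb0 : 0 < b := by omega
  have hmaps : ∀ j ∈ Icc 1 n, ggcd b j n ∈ (Icc 1 n).filter (fun d => d ^ b ∣ n) := by
    intro j hj
    have hn : 0 < n := by grind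
    obtain ⟨hpos, -, hdvd⟩ := ggcd_spec (r := j) hb0 hn
    simp [mem_filter, mem_Icc, hdvd, ggcd_le_right hb0 hn, Nat.one_le_iff_ne_zero, hpos.ne']
  rw [hgcd, ← sum_fiberwise_of_maps_to hmaps]
  refine sum_congr rfl fun d hd => ?_
  obtain ⟨hd, hdn⟩ := mem_filter.1 hd
  rw [sum_congr rfl fun j hj => (mem_filter.1 hj).2, sum_const, smul_eq_mul, mul_comm,
    ← card_filter_ggcd_eq hb0 (mem_Icc.1 hd).1, Nat.div_mul_cancel hdn]

theorem hgcd_eq_sum_klee (b n : ℕ) (hb : 2 ≤ b) (hn : 1 ≤ n) :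
    hgcd b n = ∑ d ∈ (Finset.Icc 1 n).filter (fun d => d ^ b ∣ n),
      d * klee b (n / d ^ b) :=
  hgcd_eq_sum_klee_general b n hb
end

section
/- The generalized gcd-sum function h_b(n) := Σ_{j=1}^{n} (j,n)_b is multiplicative: if gcd(m,n) = 1 then h_b(mn) = h_b(m) h_b(n). -/
lemma ggcd_eq_gcd (b j n : ℕ) : ggcd b j n = ggcd b (Nat.gcd j n) (Nat.gcd j n) := by
  unfold ggcd
  congr 1
  ext d
  simp only [Set.mem_setOf_eq, and_self, Nat.dvd_gcd_iff]

lemma ggcd_bdd (b g : ℕ) (hb : 1 ≤ b) (hg : 0 < g) :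
    BddAbove {d : ℕ | 0 < d ∧ d ^ b ∣ g ∧ d ^ b ∣ g} := by
  refine ⟨g, fun d hd => ?_⟩
  obtain ⟨hd1, hd2, -⟩ := hd
  calc d ≤ d ^ b := Nat.le_self_pow (by omega) d
    _ ≤ g := Nat.le_of_dvd hg hd2

lemma ggcd_mem (b g : ℕ) (hb : 1 ≤ b) (hg : 0 < g) :
    0 < ggcd b g g ∧ (ggcd b g g) ^ b ∣ g := by
  have h := Nat.sSup_mem (s := {d : ℕ | 0 < d ∧ d ^ b ∣ g ∧ d ^ b ∣ g})
    ⟨1, by simp⟩ (ggcd_bdd b g hb hg)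
  exact ⟨h.1, h.2.1⟩

lemma le_ggcd_s3 (b g d : ℕ) (hb : 1 ≤ b) (hg : 0 < g) (hd : 0 < d) (hdvd : d ^ b ∣ g) :
    d ≤ ggcd b g g :=
  le_csSup (ggcd_bdd b g hb hg) ⟨hd, hdvd, hdvd⟩

lemma ggcd_mul (b : ℕ) (hb : 1 ≤ b) {g1 g2 : ℕ} (h1 : 0 < g1) (h2 : 0 < g2)
    (hco : Nat.Coprime g1 g2) :
    ggcd b (g1 * g2) (g1 * g2) = ggcd b g1 g1 * ggcd b g2 g2 := by
  have h12 : 0 < g1 * g2 := Nat.mul_pos h1 h2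
  obtain ⟨hfpos, hfdvd⟩ := ggcd_mem b (g1 * g2) hb h12
  obtain ⟨hp1, hd1⟩ := ggcd_mem b g1 hb h1
  obtain ⟨hp2, hd2⟩ := ggcd_mem b g2 hb h2
  apply le_antisymm
  · -- decompose d := ggcd b (g1*g2) (g1*g2)
    set d := ggcd b (g1 * g2) (g1 * g2) with hdset
    set e1 := Nat.gcd (d ^ b) g1 with he1
    set e2 := Nat.gcd (d ^ b) g2 with he2
    have hmul : e1 * e2 = d ^ b := by
      rw [← Nat.Coprime.gcd_mul _ hco]
      exact Nat.gcd_eq_left hfdvd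
    have hcop : Nat.Coprime e1 e2 :=
      Nat.Coprime.coprime_dvd_left (Nat.gcd_dvd_right _ _)
        (Nat.Coprime.coprime_dvd_right (Nat.gcd_dvd_right _ _) hco)
    have hunit : IsUnit (gcd e1 e2) := by
      rw [Nat.isUnit_iff]
      exact hcop
    obtain ⟨d1, hd1'⟩ := exists_eq_pow_of_mul_eq_pow hunit hmul
    have hmul' : e2 * e1 = d ^ b := by rw [mul_comm]; exact hmul
    have hunit' : IsUnit (gcd e2 e1) := by
      rw [Nat.isUnit_iff]
      exact hcop.symm
    obtain ⟨d2, hd2'⟩ := exists_eq_pow_of_mul_eq_pow hunit' hmul'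
    have hdd : (d1 * d2) ^ b = d ^ b := by
      rw [mul_pow, ← hd1', ← hd2', hmul]
    have hdeq : d1 * d2 = d := Nat.pow_left_injective (by omega) hdd
    have hd1pos : 0 < d1 := by
      rcases Nat.eq_zero_or_pos d1 with h | h
      · exfalso
        have : e1 = 0 := by rw [hd1', h, Nat.zero_pow (by omega)]
        have : (0:ℕ) < e1 := Nat.gcd_pos_of_pos_right _ h1
        omega
      · exact h
    have hd2pos : 0 < d2 := by
      rcases Nat.eq_zero_or_pos d2 with h | h
      · exfalso
        have : e2 = 0 := by rw [hd2', h, Nat.zero_pow (by omega)]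
        have : (0:ℕ) < e2 := Nat.gcd_pos_of_pos_right _ h2
        omega
      · exact h
    have hdvd1 : d1 ^ b ∣ g1 := by rw [← hd1']; exact Nat.gcd_dvd_right _ _
    have hdvd2 : d2 ^ b ∣ g2 := by rw [← hd2']; exact Nat.gcd_dvd_right _ _
    calc d = d1 * d2 := hdeq.symm
      _ ≤ ggcd b g1 g1 * ggcd b g2 g2 :=
        Nat.mul_le_mul (le_ggcd_s3 b g1 d1 hb h1 hd1pos hdvd1)
          (le_ggcd_s3 b g2 d2 hb h2 hd2pos hdvd2)
  · apply le_ggcd_s3 b _ _ hb h12 (Nat.mul_pos hp1 hp2)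
    rw [mul_pow]
    exact mul_dvd_mul hd1 hd2

lemma hgcd_eq_range (b n : ℕ) (hn : 1 ≤ n) :
    hgcd b n = ∑ j ∈ Finset.range n, ggcd b (Nat.gcd j n) (Nat.gcd j n) := by
  unfold hgcd
  have hIcc : Finset.Icc 1 n = insert n (Finset.Ico 1 n) := by
    rw [Finset.Ico_insert_right hn]
  have hrange : Finset.range n = insert 0 (Finset.Ico 1 n) := by
    ext x
    simp [Finset.mem_range, Finset.mem_Ico]
    omega
  rw [hIcc, hrange, Finset.sum_insert (by simp), Finset.sum_insert (by simp)]
  congr 1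
  · rw [ggcd_eq_gcd, Nat.gcd_self, Nat.gcd_zero_left]
  · exact Finset.sum_congr rfl fun j _ => ggcd_eq_gcd b j n

theorem hgcd_multiplicative (b m n : ℕ) (hb : 2 ≤ b) (hm : 1 ≤ m) (hn : 1 ≤ n)
    (h : Nat.Coprime m n) : hgcd b (m * n) = hgcd b m * hgcd b n := by
  have hb1 : 1 ≤ b := by omega
  have hmn : 1 ≤ m * n := Nat.mul_pos hm hn
  rw [hgcd_eq_range b (m * n) hmn, hgcd_eq_range b m hm, hgcd_eq_range b n hn]
  have key : ∀ j : ℕ, ggcd b (Nat.gcd j (m * n)) (Nat.gcd j (m * n))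
      = ggcd b (Nat.gcd j m) (Nat.gcd j m) * ggcd b (Nat.gcd j n) (Nat.gcd j n) := by
    intro j
    rw [Nat.Coprime.gcd_mul j h]
    exact ggcd_mul b hb1 (Nat.gcd_pos_of_pos_right j hm) (Nat.gcd_pos_of_pos_right j hn)
      (Nat.Coprime.coprime_dvd_left (Nat.gcd_dvd_right _ _)
        (Nat.Coprime.coprime_dvd_right (Nat.gcd_dvd_right _ _) h))
  rw [Finset.sum_congr rfl fun j _ => key j, Finset.sum_mul_sum, ← Finset.sum_product']
  apply Finset.sum_nbij' (fun j => (j % m, j % n))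
    (fun p => (Nat.chineseRemainder h p.1 p.2).val % (m * n))
  · intro j hj
    simp only [Finset.mem_product, Finset.mem_range] at *
    exact ⟨Nat.mod_lt _ hm, Nat.mod_lt _ hn⟩
  · intro p hp
    simp only [Finset.mem_range]
    exact Nat.mod_lt _ hmn
  · intro j hj
    simp only [Finset.mem_range] at hj
    -- show crt (j % m) (j % n) % (m*n) = j
    have hcrt := (Nat.chineseRemainder h (j % m) (j % n)).2
    set k := (Nat.chineseRemainder h (j % m) (j % n)).val with hk
    have h1 : k ≡ j [MOD m] := hcrt.1.trans (Nat.mod_modEq j m)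
    have h2 : k ≡ j [MOD n] := hcrt.2.trans (Nat.mod_modEq j n)
    have h3 : k ≡ j [MOD m * n] := (Nat.modEq_and_modEq_iff_modEq_mul h).mp ⟨h1, h2⟩
    rw [Nat.ModEq] at h3
    rwa [Nat.mod_eq_of_lt hj] at h3
  · intro p hp
    simp only [Finset.mem_product, Finset.mem_range] at hp
    have hcrt := (Nat.chineseRemainder h p.1 p.2).2
    set k := (Nat.chineseRemainder h p.1 p.2).val with hk
    have h1 : k % (m * n) % m = p.1 := by
      rw [Nat.mod_mod_of_dvd k ⟨n, rfl⟩]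
      have h1' := hcrt.1
      rw [Nat.ModEq, Nat.mod_eq_of_lt hp.1] at h1'
      exact h1'
    have h2 : k % (m * n) % n = p.2 := by
      rw [Nat.mod_mod_of_dvd k ⟨m, mul_comm m n⟩]
      have h2' := hcrt.2
      rw [Nat.ModEq, Nat.mod_eq_of_lt hp.2] at h2'
      exact h2'
    exact Prod.ext h1 h2
  · intro j hj
    have hg1 : Nat.gcd (j % m) m = Nat.gcd j m := by
      rw [← Nat.gcd_rec, Nat.gcd_comm]
    have hg2 : Nat.gcd (j % n) n = Nat.gcd j n := by
      rw [← Nat.gcd_rec, Nat.gcd_comm]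
    rw [hg1, hg2]
end

section
/- Klee's totient φ_b is multiplicative and satisfies φ_b(n) = n · Π_{p prime, p^b | n} (1 − p^{−b}). -/
lemma prod_pow_dvd {b k : ℕ} {T : Finset ℕ} (hT : ∀ p ∈ T, p.Prime)
    (h : ∀ p ∈ T, p ^ b ∣ k) : (∏ p ∈ T, p ^ b) ∣ k := by
  classical
  induction T using Finset.induction with
  | empty => simp
  | @insert q T hq ih =>
    rw [Finset.prod_insert hq]
    have hcop : Nat.Coprime (q ^ b) (∏ p ∈ T, p ^ b) := by
      apply Nat.Coprime.prod_right
      intro p hpT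
      exact Nat.Coprime.pow _ _
        ((Nat.coprime_primes (hT q (Finset.mem_insert_self q T))
          (hT p (Finset.mem_insert_of_mem hpT))).mpr (by rintro rfl; exact hq hpT))
    exact hcop.mul_dvd_of_dvd_of_dvd (h q (Finset.mem_insert_self q T))
      (ih (fun p hpT => hT p (Finset.mem_insert_of_mem hpT))
          (fun p hpT => h p (Finset.mem_insert_of_mem hpT)))

lemma ggcd_eq_one_iff {b : ℕ} (hb : 1 ≤ b) {k n : ℕ} (hn : 0 < n) :
    ggcd b k n = 1 ↔ ∀ p : ℕ, p.Prime → p ^ b ∣ k → ¬ p ^ b ∣ n := by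
  classical
  set D : Set ℕ := {d : ℕ | 0 < d ∧ d ^ b ∣ k ∧ d ^ b ∣ n} with hD
  have h1 : 1 ∈ D := ⟨one_pos, by simp, by simp⟩
  have hbdd : BddAbove D := by
    refine ⟨n, fun d hd => ?_⟩
    have : d ^ b ≤ n := Nat.le_of_dvd hn hd.2.2
    exact le_trans (Nat.le_self_pow (by omega) d) this
  constructor
  · intro hgg p hp hpk hpn
    have hpD : p ∈ D := ⟨hp.pos, hpk, hpn⟩
    have := le_csSup hbdd hpD
    rw [ggcd] at hgg
    rw [hgg] at this
    exact absurd this (by have := hp.two_le; omega)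
  · intro h
    have hDeq : D = {1} := by
      ext d
      simp only [Set.mem_singleton_iff]
      constructor
      · rintro ⟨hd0, hdk, hdn⟩
        by_contra hd1
        obtain ⟨p, hp, hpd⟩ := Nat.exists_prime_and_dvd (by omega : d ≠ 1)
        exact h p hp (dvd_trans (pow_dvd_pow_of_dvd hpd b) hdk)
          (dvd_trans (pow_dvd_pow_of_dvd hpd b) hdn)
      · rintro rfl; exact h1
    rw [ggcd, ← hD, hDeq]
    exact csSup_singleton 1

lemma klee_formula (b : ℕ) (hb : 1 ≤ b) (n : ℕ) (hn : 1 ≤ n) :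
    (klee b n : ℝ) = (n : ℝ) *
      ∏ p ∈ n.primeFactors.filter (fun p => p ^ b ∣ n),
        (1 - ((p : ℝ) ^ b)⁻¹) := by
  classical
  set S : Finset ℕ := n.primeFactors.filter (fun p => p ^ b ∣ n) with hS
  have hSprime : ∀ p ∈ S, p.Prime := fun p hp =>
    Nat.prime_of_mem_primeFactors (Finset.mem_filter.mp hp).1
  have hSdvd : ∀ p ∈ S, p ^ b ∣ n := fun p hp => (Finset.mem_filter.mp hp).2
  have hTprod_dvd : ∀ T ∈ S.powerset, (∏ p ∈ T, p ^ b) ∣ n := by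
    intro T hT
    rw [Finset.mem_powerset] at hT
    exact prod_pow_dvd (fun p hp => hSprime p (hT hp)) (fun p hp => hSdvd p (hT hp))
  have hfilter : ((Finset.Icc 1 n).filter (fun k => ggcd b k n = 1)) =
      ((Finset.Icc 1 n).filter (fun k => ∀ p ∈ S, ¬ p ^ b ∣ k)) := by
    apply Finset.filter_congr
    intro k hk
    rw [ggcd_eq_one_iff hb (by omega)]
    constructor
    · intro h p hp hpk
      exact h p (hSprime p hp) hpk (hSdvd p hp)
    · intro h p hp hpk hpn
      have hpS : p ∈ S := by
        rw [hS, Finset.mem_filter, Nat.mem_primeFactors]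
        exact ⟨⟨hp, dvd_trans (dvd_pow_self p (by omega)) hpn, by omega⟩, hpn⟩
      exact h p hpS hpk
  have key : (klee b n : ℝ) =
      ∑ T ∈ S.powerset, (-1 : ℝ) ^ T.card * ((n / ∏ p ∈ T, p ^ b : ℕ) : ℝ) := by
    rw [klee, hfilter, ← Finset.sum_boole]
    have step1 : ∀ k : ℕ, (if ∀ p ∈ S, ¬ p ^ b ∣ k then (1:ℝ) else 0) =
        ∏ p ∈ S, ((-(if p ^ b ∣ k then (1:ℝ) else 0)) + 1) := by
      intro k
      by_cases h : ∀ p ∈ S, ¬ p ^ b ∣ k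
      · rw [if_pos h, eq_comm]
        apply Finset.prod_eq_one
        intro p hp
        rw [if_neg (h p hp)]; ring
      · rw [if_neg h, eq_comm]
        push_neg at h
        obtain ⟨p, hp, hpk⟩ := h
        apply Finset.prod_eq_zero hp
        rw [if_pos hpk]; ring
    have step2 : ∀ k : ℕ, (∏ p ∈ S, ((-(if p ^ b ∣ k then (1:ℝ) else 0)) + 1)) =
        ∑ T ∈ S.powerset, (-1:ℝ) ^ T.card * (if (∏ p ∈ T, p ^ b) ∣ k then 1 else 0) := by
      intro k
      rw [Finset.prod_add]
      apply Finset.sum_congr rfl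
      intro T hT
      rw [Finset.mem_powerset] at hT
      rw [Finset.prod_const_one, mul_one]
      have : ∀ p ∈ T, (-(if p ^ b ∣ k then (1:ℝ) else 0)) =
          (-1) * (if p ^ b ∣ k then (1:ℝ) else 0) := by intro p _; ring
      rw [Finset.prod_congr rfl this, Finset.prod_mul_distrib, Finset.prod_const]
      congr 1
      by_cases h : (∏ p ∈ T, p ^ b) ∣ k
      · rw [if_pos h]
        apply Finset.prod_eq_one
        intro p hp
        rw [if_pos (dvd_trans (Finset.dvd_prod_of_mem _ hp) h)]
      · rw [if_neg h]
        have : ¬ ∀ p ∈ T, p ^ b ∣ k := fun hall =>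
          h (prod_pow_dvd (fun p hp => hSprime p (hT hp)) hall)
        push_neg at this
        obtain ⟨p, hp, hpk⟩ := this
        exact Finset.prod_eq_zero hp (if_neg hpk)
    simp only [step1, step2]
    rw [Finset.sum_comm]
    apply Finset.sum_congr rfl
    intro T hT
    rw [← Finset.mul_sum]
    congr 1
    rw [Finset.sum_boole]
    rw [show Finset.Icc 1 n = Finset.Ioc 0 n from Finset.Icc_add_one_left_eq_Ioc 0 n]
    norm_cast
    exact Nat.Ioc_filter_dvd_card_eq_div n _
  rw [key]
  have expand : ∏ p ∈ S, (1 - ((p : ℝ) ^ b)⁻¹) =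
      ∑ T ∈ S.powerset, (-1:ℝ) ^ T.card * (∏ p ∈ T, ((p:ℝ) ^ b)⁻¹) := by
    have : ∀ p ∈ S, (1 - ((p : ℝ) ^ b)⁻¹) = (-((p:ℝ) ^ b)⁻¹) + 1 := by
      intro p _; ring
    rw [Finset.prod_congr rfl this, Finset.prod_add]
    apply Finset.sum_congr rfl
    intro T hT
    rw [Finset.prod_const_one, mul_one]
    have : ∀ p ∈ T, (-((p:ℝ) ^ b)⁻¹) = (-1) * ((p:ℝ) ^ b)⁻¹ := by intro p _; ring
    rw [Finset.prod_congr rfl this, Finset.prod_mul_distrib, Finset.prod_const]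
  rw [expand, Finset.mul_sum]
  apply Finset.sum_congr rfl
  intro T hT
  have hdvd := hTprod_dvd T hT
  have hpos : (0:ℝ) < ∏ p ∈ T, (p:ℝ) ^ b := by
    apply Finset.prod_pos
    intro p hp
    have := (hSprime p (Finset.mem_powerset.mp hT hp)).pos
    positivity
  rw [Nat.cast_div hdvd (by push_cast at hpos ⊢; exact ne_of_gt hpos)]
  push_cast
  rw [div_eq_mul_inv, ← Finset.prod_inv_distrib]
  ring

theorem klee_multiplicative_and_formula (b : ℕ) (hb : 1 ≤ b) :
    (∀ m n : ℕ, 1 ≤ m → 1 ≤ n → Nat.Coprime m n →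
      klee b (m * n) = klee b m * klee b n) ∧
    (∀ n : ℕ, 1 ≤ n →
      (klee b n : ℝ) = (n : ℝ) *
        ∏ p ∈ n.primeFactors.filter (fun p => p ^ b ∣ n),
          (1 - ((p : ℝ) ^ b)⁻¹)) := by
  refine ⟨?_, klee_formula b hb⟩
  intro m n hm hn hmn
  have hmn0 : 1 ≤ m * n := Nat.one_le_iff_ne_zero.mpr (by positivity)
  have hdvd_iff : ∀ p : ℕ, p.Prime → (p ^ b ∣ m * n ↔ p ^ b ∣ m ∨ p ^ b ∣ n) := by
    intro p hp
    constructor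
    · intro h
      have hpmn : p ∣ m * n := dvd_trans (dvd_pow_self p (by omega)) h
      rcases hp.dvd_mul.mp hpmn with hpm | hpn
      · left
        have hpn' : ¬ p ∣ n := fun hc =>
          hp.one_lt.ne' (Nat.eq_one_of_dvd_coprimes hmn hpm hc)
        have : Nat.Coprime (p ^ b) n :=
          Nat.Coprime.pow_left _ ((Nat.Prime.coprime_iff_not_dvd hp).mpr hpn')
        exact this.dvd_of_dvd_mul_right h
      · right
        have hpm' : ¬ p ∣ m := fun hc =>
          hp.one_lt.ne' (Nat.eq_one_of_dvd_coprimes hmn hc hpn)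
        have : Nat.Coprime (p ^ b) m :=
          Nat.Coprime.pow_left _ ((Nat.Prime.coprime_iff_not_dvd hp).mpr hpm')
        exact this.dvd_of_dvd_mul_left h
    · rintro (h | h)
      · exact h.mul_right n
      · exact h.mul_left m
  have hSunion : (m * n).primeFactors.filter (fun p => p ^ b ∣ m * n) =
      (m.primeFactors.filter (fun p => p ^ b ∣ m)) ∪
      (n.primeFactors.filter (fun p => p ^ b ∣ n)) := by
    ext p
    simp only [Finset.mem_union, Finset.mem_filter, Nat.mem_primeFactors]
    constructor
    · rintro ⟨⟨hp, _, _⟩, hpb⟩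
      rcases (hdvd_iff p hp).mp hpb with h | h
      · exact Or.inl ⟨⟨hp, dvd_trans (dvd_pow_self p (by omega)) h, by omega⟩, h⟩
      · exact Or.inr ⟨⟨hp, dvd_trans (dvd_pow_self p (by omega)) h, by omega⟩, h⟩
    · rintro (⟨⟨hp, hpm, _⟩, hpb⟩ | ⟨⟨hp, hpn, _⟩, hpb⟩)
      · exact ⟨⟨hp, hpm.mul_right n, by positivity⟩, (hdvd_iff p hp).mpr (Or.inl hpb)⟩
      · exact ⟨⟨hp, hpn.mul_left m, by positivity⟩, (hdvd_iff p hp).mpr (Or.inr hpb)⟩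
  have hdisj : Disjoint (m.primeFactors.filter (fun p => p ^ b ∣ m))
      (n.primeFactors.filter (fun p => p ^ b ∣ n)) := by
    rw [Finset.disjoint_left]
    rintro p hpm hpn
    have h1 := Finset.mem_filter.mp hpm
    have h2 := Finset.mem_filter.mp hpn
    have hp := Nat.prime_of_mem_primeFactors h1.1
    exact hp.one_lt.ne' (Nat.eq_one_of_dvd_coprimes hmn
      (Nat.dvd_of_mem_primeFactors h1.1) (Nat.dvd_of_mem_primeFactors h2.1))
  have : (klee b (m * n) : ℝ) = (klee b m : ℝ) * (klee b n : ℝ) := by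
    rw [klee_formula b hb _ hmn0, klee_formula b hb _ hm, klee_formula b hb _ hn,
      hSunion, Finset.prod_union hdisj]
    push_cast
    ring
  exact_mod_cast this
end

section
/- For a prime p, integers k ≥ 0 and 0 ≤ j < b, the generalized gcd-sum function satisfies h_b(p^{kb+j}) = p^{k+j} · (1 + (p^b − 1)(p^{k(b−1)} − 1) / (p(p^{b−1} − 1))). -/
lemma ggcd_eq (b p N m : ℕ) (hb : 0 < b) (hp : p.Prime) (hm : m ≠ 0) :
    ggcd b m (p ^ N) = p ^ (min (N / b) (m.factorization p / b)) := by
  have hp1 : 1 < p := hp.one_lt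
  set v := m.factorization p with hv
  set M := min (N / b) (v / b) with hM
  have hgr : IsGreatest {d : ℕ | 0 < d ∧ d ^ b ∣ m ∧ d ^ b ∣ p ^ N} (p ^ M) := by
    constructor
    · refine ⟨pow_pos hp.pos _, ?_, ?_⟩
      · rw [← pow_mul, hp.pow_dvd_iff_le_factorization hm, ← hv]
        calc M * b ≤ (v / b) * b := by gcongr; exact min_le_right _ _
          _ ≤ v := Nat.div_mul_le_self _ _
      · rw [← pow_mul]
        apply pow_dvd_pow
        calc M * b ≤ (N / b) * b := by gcongr; exact min_le_left _ _
          _ ≤ N := Nat.div_mul_le_self _ _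
    · rintro d ⟨hd0, hdm, hdn⟩
      have hdvd : d ∣ p ^ N := (dvd_pow_self d hb.ne').trans hdn
      obtain ⟨i, hiN, rfl⟩ := (Nat.dvd_prime_pow hp).mp hdvd
      have h1 : i * b ≤ N := by
        rw [← pow_mul] at hdn
        exact (Nat.pow_dvd_pow_iff_le_right hp1).mp hdn
      have h2 : i * b ≤ v := by
        rw [← pow_mul, hp.pow_dvd_iff_le_factorization hm] at hdm
        exact hdm
      have : i ≤ M := le_min ((Nat.le_div_iff_mul_le hb).mpr h1)
        ((Nat.le_div_iff_mul_le hb).mpr h2)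
      exact Nat.pow_le_pow_right hp.pos this
  exact hgr.csSup_eq

lemma pow_min_eq (p k w : ℕ) (hp : 1 ≤ p) :
    p ^ (min k w) = ∑ i ∈ Finset.range (k + 1),
      (if i ≤ w then (if i = 0 then 1 else p ^ i - p ^ (i - 1)) else 0) := by
  induction k with
  | zero => simp
  | succ k ih =>
    rw [Finset.sum_range_succ, ← ih]
    by_cases h : k + 1 ≤ w
    · have h1 : min (k + 1) w = k + 1 := min_eq_left h
      have h2 : min k w = k := min_eq_left (by omega)
      rw [h1, h2, if_pos h, if_neg (by omega)]
      have : p ^ k ≤ p ^ (k + 1) := Nat.pow_le_pow_right hp (by omega)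
      simp
      omega
    · have h1 : min (k + 1) w = min k w := by omega
      rw [h1, if_neg h]; omega

theorem hgcd_prime_pow (b p k j : ℕ) (hb : 2 ≤ b) (hp : p.Prime) (hj : j < b) :
    (hgcd b (p ^ (k * b + j)) : ℝ) =
      (p : ℝ) ^ (k + j) *
        (1 + ((p : ℝ) ^ b - 1) * ((p : ℝ) ^ (k * (b - 1)) - 1) /
          ((p : ℝ) * ((p : ℝ) ^ (b - 1) - 1))) := by
  have hb0 : 0 < b := by omega
  have hp1 : 1 < p := hp.one_lt
  set N := k * b + j with hN
  have hNb : N / b = k := by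
    rw [hN, Nat.add_comm, Nat.add_mul_div_right _ _ hb0, Nat.div_eq_of_lt hj]
    omega
  -- step 1: hgcd as sum of powers
  have step1 : hgcd b (p ^ N) = ∑ i ∈ Finset.range (k + 1),
      (if i = 0 then 1 else p ^ i - p ^ (i - 1)) * p ^ (N - i * b) := by
    have : hgcd b (p ^ N) = ∑ m ∈ Finset.Icc 1 (p ^ N),
        ∑ i ∈ Finset.range (k + 1),
          (if p ^ (i * b) ∣ m then (if i = 0 then 1 else p ^ i - p ^ (i - 1)) else 0) := by
      unfold hgcd
      apply Finset.sum_congr rfl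
      intro m hm
      have hm0 : m ≠ 0 := by
        simp only [Finset.mem_Icc] at hm; omega
      rw [ggcd_eq b p N m hb0 hp hm0, hNb, pow_min_eq p k _ hp.pos]
      apply Finset.sum_congr rfl
      intro i _
      congr 1
      have : p ^ (i * b) ∣ m ↔ i * b ≤ m.factorization p :=
        hp.pow_dvd_iff_le_factorization hm0
      rw [eq_iff_iff, Nat.le_div_iff_mul_le hb0, this]
    rw [this, Finset.sum_comm]
    apply Finset.sum_congr rfl
    intro i hi
    simp only [Finset.mem_range] at hi
    rw [← Finset.sum_filter]
    rw [Finset.sum_const, smul_eq_mul, mul_comm]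
    congr 1
    have : Finset.Icc 1 (p ^ N) = Finset.Ioc 0 (p ^ N) := rfl
    rw [this, Nat.Ioc_filter_dvd_card_eq_div, Nat.pow_div ?_ hp.pos]
    calc i * b ≤ k * b := by gcongr; omega
      _ ≤ N := by omega
  -- step 2: peel off i = 0 and cast to ℝ
  rw [step1, Finset.sum_range_succ']
  simp only [if_neg (Nat.succ_ne_zero _), if_pos rfl, Nat.add_sub_cancel]
  obtain ⟨c, rfl⟩ : ∃ c, b = c + 1 := ⟨b - 1, by omega⟩
  have hc : 1 ≤ c := by omega
  have hP0 : (p : ℝ) ≠ 0 := by positivity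
  have hpow : ∀ i : ℕ, i < k → ((p : ℝ) ^ (N - (i + 1) * (c + 1)) : ℝ)
      = (p : ℝ) ^ N / (p : ℝ) ^ ((i + 1) * (c + 1)) := by
    intro i hi
    rw [eq_div_iff (by positivity), ← pow_add]
    congr 1
    have : (i + 1) * (c + 1) ≤ N := by
      calc (i + 1) * (c + 1) ≤ k * (c + 1) := by gcongr; omega
        _ ≤ N := by omega
    omega
  have hterm : ∀ i ∈ Finset.range k,
      ((p ^ (i + 1) - p ^ i : ℕ) : ℝ) * ((p : ℝ)) ^ (N - (i + 1) * (c + 1))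
        = (p : ℝ) ^ N * (1 - 1 / (p : ℝ)) * ((p : ℝ) / (p : ℝ) ^ (c + 1)) ^ (i + 1) := by
    intro i hi
    rw [Nat.cast_sub (Nat.pow_le_pow_right hp.pos (by omega)),
      hpow i (Finset.mem_range.mp hi)]
    push_cast
    rw [div_pow, ← pow_mul]
    field_simp
    ring
  push_cast [Finset.sum_congr rfl hterm]
  set P := (p : ℝ) with hPdef
  have hP2 : (2 : ℝ) ≤ P := by rw [hPdef]; exact_mod_cast hp.two_le
  have hQ : (1 : ℝ) < P ^ c := one_lt_pow₀ (by linarith) (by omega)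
  set Q := P ^ c with hQdef
  have hQ0 : Q ≠ 0 := by positivity
  have hQ1 : Q ≠ 1 := by linarith
  have hx : P / P ^ (c + 1) = 1 / Q := by rw [hQdef, pow_succ]; field_simp
  have hPN : P ^ N = Q ^ k * (P ^ k * P ^ j) := by
    rw [hN, hQdef, ← pow_mul, ← pow_add, ← pow_add]
    congr 1; ring
  have hkc : P ^ (k * c) = Q ^ k := by rw [hQdef, ← pow_mul, Nat.mul_comm]
  have hkj : P ^ (k + j) = P ^ k * P ^ j := pow_add P k j
  have hy1 : (1 : ℝ) / Q ≠ 1 := by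
    have : 1 / Q < 1 := by rw [div_lt_one (by linarith)]; exact hQ
    exact ne_of_lt this
  have hsum : ∑ x ∈ Finset.range k, P ^ N * (1 - 1 / P) * (P / P ^ (c + 1)) ^ (x + 1)
      = P ^ N * (1 - 1 / P) * ((1 / Q) * (((1 / Q) ^ k - 1) / (1 / Q - 1))) := by
    rw [← Finset.mul_sum]
    congr 1
    simp only [hx]
    simp only [pow_succ']
    rw [← Finset.mul_sum, geom_sum_eq hy1]
  rw [hsum, Nat.zero_mul, Nat.sub_zero, hPN, hkc, hkj, pow_succ, ← hQdef]
  have hA0 : Q ^ k ≠ 0 := pow_ne_zero _ hQ0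
  have hQ1' : Q - 1 ≠ 0 := sub_ne_zero.mpr hQ1
  have hy1' : 1 / Q - 1 ≠ 0 := sub_ne_zero.mpr hy1
  clear_value P Q
  rw [div_pow, one_pow]
  generalize hA : Q ^ k = A at hA0 ⊢
  generalize hB : P ^ k * P ^ j = B
  have h1Q : (1 : ℝ) - Q ≠ 0 := fun h => hQ1' (by linarith)
  have e1 : 1 / Q - 1 = (1 - Q) / Q := by field_simp
  have key : 1 / Q * ((1 / A - 1) / (1 / Q - 1)) = (A - 1) / (A * (Q - 1)) := by
    rw [e1]
    field_simp
    ring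
  rw [key]
  field_simp
  ring
end

section
/- For b = 2, the generalized gcd-sum function satisfies h_2(n) = O(n log n), i.e., there is a constant C with h_2(n) ≤ C·n·log(n+1) for all n ≥ 1. -/
lemma ggcd_spec_s7 {j n : ℕ} (hj : 0 < j) :
    0 < ggcd 2 j n ∧ (ggcd 2 j n) ^ 2 ∣ j ∧ (ggcd 2 j n) ^ 2 ∣ n := by
  have hne : ({d : ℕ | 0 < d ∧ d ^ 2 ∣ j ∧ d ^ 2 ∣ n}).Nonempty := ⟨1, by simp⟩
  have hbdd : BddAbove {d : ℕ | 0 < d ∧ d ^ 2 ∣ j ∧ d ^ 2 ∣ n} := by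
    refine ⟨j, fun d hd => ?_⟩
    obtain ⟨hd0, hdj, _⟩ := hd
    calc d ≤ d ^ 2 := by nlinarith
    _ ≤ j := Nat.le_of_dvd hj hdj
  exact Nat.sSup_mem hne hbdd

lemma hgcd_le_sum (n : ℕ) (hn : 1 ≤ n) :
    hgcd 2 n ≤ ∑ d ∈ Finset.Icc 1 n, n / d := by
  have hmaps : ∀ j ∈ Finset.Icc 1 n, ggcd 2 j n ∈ Finset.Icc 1 n := by
    intro j hj
    simp only [Finset.mem_Icc] at hj ⊢
    obtain ⟨h0, _, hdn⟩ := ggcd_spec_s7 (j := j) (n := n) hj.1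
    refine ⟨h0, ?_⟩
    calc ggcd 2 j n ≤ (ggcd 2 j n) ^ 2 := by nlinarith
    _ ≤ n := Nat.le_of_dvd hn hdn
  rw [hgcd, ← Finset.sum_fiberwise_of_maps_to hmaps (fun j => ggcd 2 j n)]
  apply Finset.sum_le_sum
  intro d hd
  have hcard : ∀ j ∈ Finset.Icc 1 n, ggcd 2 j n = d → ggcd 2 j n = d := fun _ _ h => h
  calc ∑ j ∈ (Finset.Icc 1 n).filter (fun j => ggcd 2 j n = d), ggcd 2 j n
      = ∑ j ∈ (Finset.Icc 1 n).filter (fun j => ggcd 2 j n = d), d := by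
        apply Finset.sum_congr rfl; intro j hj
        exact (Finset.mem_filter.mp hj).2
    _ = ((Finset.Icc 1 n).filter (fun j => ggcd 2 j n = d)).card * d := by
        rw [Finset.sum_const, smul_eq_mul]
    _ ≤ (n / d ^ 2) * d := by
        apply Nat.mul_le_mul_right
        have hsub : (Finset.Icc 1 n).filter (fun j => ggcd 2 j n = d) ⊆
            (Finset.Ioc 0 n).filter (fun j => d ^ 2 ∣ j) := by
          intro j hj
          rw [Finset.mem_filter] at hj ⊢
          obtain ⟨hj1, hj2⟩ := hj
          rw [Finset.mem_Icc] at hj1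
          refine ⟨Finset.mem_Ioc.mpr ⟨hj1.1, hj1.2⟩, ?_⟩
          rw [← hj2]
          exact (ggcd_spec_s7 hj1.1).2.1
        calc _ ≤ ((Finset.Ioc 0 n).filter (fun j => d ^ 2 ∣ j)).card :=
              Finset.card_le_card hsub
          _ = n / d ^ 2 := Nat.Ioc_filter_dvd_card_eq_div n (d ^ 2)
    _ ≤ n / d := by
        rw [pow_two, ← Nat.div_div_eq_div_mul]
        exact Nat.div_mul_le_self _ d

theorem hgcd_two_bigO :
    ∃ C : ℝ, ∀ n : ℕ, 1 ≤ n → (hgcd 2 n : ℝ) ≤ C * n * Real.log (n + 1) := by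
  use 1 + 1 / Real.log 2
  intro n hn
  have h1 : (hgcd 2 n : ℝ) ≤ ∑ d ∈ Finset.Icc 1 n, ((n / d : ℕ) : ℝ) := by
    exact_mod_cast hgcd_le_sum n hn
  have h2 : ∑ d ∈ Finset.Icc 1 n, ((n / d : ℕ) : ℝ) ≤ (n : ℝ) * (harmonic n : ℝ) := by
    rw [harmonic_eq_sum_Icc]
    push_cast
    rw [Finset.mul_sum]
    apply Finset.sum_le_sum
    intro d hd
    rw [Finset.mem_Icc] at hd
    have hd0 : (0 : ℝ) < d := by exact_mod_cast hd.1
    calc ((n / d : ℕ) : ℝ) ≤ (n : ℝ) / d := Nat.cast_div_le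
      _ = (n : ℝ) * (d : ℝ)⁻¹ := by ring
  have h3 : (harmonic n : ℝ) ≤ 1 + Real.log n := harmonic_le_one_add_log n
  have hlog2 : (0 : ℝ) < Real.log 2 := Real.log_pos (by norm_num)
  have hlogn1 : Real.log 2 ≤ Real.log (n + 1) := by
    apply Real.log_le_log (by norm_num)
    have : (1 : ℝ) ≤ (n : ℝ) := by exact_mod_cast hn
    linarith
  have h4 : 1 + Real.log n ≤ (1 + 1 / Real.log 2) * Real.log (n + 1) := by
    have hn1 : (1 : ℝ) ≤ (n : ℝ) := by exact_mod_cast hn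
    have h5 : Real.log n ≤ Real.log (n + 1) := Real.log_le_log (by linarith) (by linarith)
    have h6 : 1 ≤ Real.log (n + 1) / Real.log 2 := (one_le_div hlog2).mpr hlogn1
    have h7 : 0 ≤ Real.log (n + 1) := le_trans hlog2.le hlogn1
    calc 1 + Real.log n ≤ Real.log (n + 1) / Real.log 2 + Real.log (n + 1) := by linarith
      _ = (1 + 1 / Real.log 2) * Real.log (n + 1) := by ring
  have hn0 : (0 : ℝ) ≤ n := Nat.cast_nonneg n
  calc (hgcd 2 n : ℝ) ≤ (n : ℝ) * (harmonic n : ℝ) := le_trans h1 h2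
    _ ≤ (n : ℝ) * ((1 + 1 / Real.log 2) * Real.log (n + 1)) := by
        apply mul_le_mul_of_nonneg_left (le_trans h3 h4) hn0
    _ = (1 + 1 / Real.log 2) * n * Real.log (n + 1) := by ring
end

section
/- The function n ↦ H_b(n)/n (equivalently n ↦ Σ_{j=1}^n 1/(j,n)_b) yields a multiplicative function n ↦ n/Σ_{j≤n} 1/(j,n)_b, and for a prime p, H_b(p^{kb+j}) = p^{k(b+1)}(p^{b+1}−1) / (p^{k(b+1)}(p^{b+1}−p) + p − 1) for k ≥ 1 and 0 ≤ j ≤ b−1, while H_b(p^j) = 1 for 0 ≤ j ≤ b−1. -/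
/-- The harmonic mean `H_b(n) = n / (∑_{j ≤ n} 1/(j,n)_b)`. -/
noncomputable def Hb (b n : ℕ) : ℚ :=
  (n : ℚ) / ∑ j ∈ Finset.Icc 1 n, (1 : ℚ) / (ggcd b j n : ℚ)

/-!
Write `S(n) = ∑_{j ≤ n} 1/(j,n)_b`, so that `H_b(n) = n / S(n)`. Since `(j,n)_b` is the largest `d`
with `d ^ b ∣ gcd(j, n)`, and this "`b`-th root part" of a number is multiplicative, the Chinese
remainder theorem makes `S` multiplicative, hence also `H_b`.

At a prime power `p ^ (a + b)`, an index `j` not divisible by `p ^ b` contributes `1`, while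
`j = p ^ b * y` contributes `1 / (p * (y, p ^ a)_b)`; so `S(p^(a+b)) = p^(a+b) - p^a + S(p^a) / p`,
and `S(p^j) = p^j` for `j < b`. Induction on `k` gives `S(p^(kb+j))` in closed form.
-/

open Finset

-- For `m = 0` the set is unbounded and the `sSup` is the junk value `0`.
noncomputable def powDvdRoot (b m : ℕ) : ℕ := sSup {d : ℕ | 0 < d ∧ d ^ b ∣ m}

theorem ggcd_eq_powDvdRoot_gcd (b r s : ℕ) : ggcd b r s = powDvdRoot b (r.gcd s) := by
  simp only [ggcd, powDvdRoot, Nat.dvd_gcd_iff]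

section powDvdRoot

variable {b m : ℕ}

theorem bddAbove_powDvdRoot_set (hb : b ≠ 0) (hm : 0 < m) :
    BddAbove {d : ℕ | 0 < d ∧ d ^ b ∣ m} :=
  ⟨m, fun d hd => (Nat.le_self_pow hb d).trans (Nat.le_of_dvd hm hd.2)⟩

theorem powDvdRoot_spec (hb : b ≠ 0) (hm : 0 < m) :
    0 < powDvdRoot b m ∧ powDvdRoot b m ^ b ∣ m :=
  Nat.sSup_mem ⟨1, by simp⟩ (bddAbove_powDvdRoot_set hb hm)

theorem le_powDvdRoot (hb : b ≠ 0) (hm : 0 < m) {d : ℕ} (hd : 0 < d) (hdm : d ^ b ∣ m) :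
    d ≤ powDvdRoot b m :=
  le_csSup (bddAbove_powDvdRoot_set hb hm) ⟨hd, hdm⟩

theorem powDvdRoot_mul (hb : b ≠ 0) {u v : ℕ} (hu : 0 < u) (hv : 0 < v) (huv : u.Coprime v) :
    powDvdRoot b (u * v) = powDvdRoot b u * powDvdRoot b v := by
  obtain ⟨hu₀, hu_dvd⟩ := powDvdRoot_spec hb hu
  obtain ⟨hv₀, hv_dvd⟩ := powDvdRoot_spec hb hv
  refine le_antisymm ?_ (le_powDvdRoot hb (Nat.mul_pos hu hv) (Nat.mul_pos hu₀ hv₀)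
    (mul_pow (powDvdRoot b u) _ b ▸ mul_dvd_mul hu_dvd hv_dvd))
  obtain ⟨hd₀, hd_dvd⟩ := powDvdRoot_spec hb (Nat.mul_pos hu hv)
  set d := powDvdRoot b (u * v)
  have hsplit : d.gcd u * d.gcd v = d := by
    rw [← huv.gcd_mul d, Nat.gcd_eq_left ((dvd_pow_self d hb).trans hd_dvd)]
  have hdu : d.gcd u ^ b ∣ u :=
    ((huv.coprime_dvd_left (d.gcd_dvd_right u)).pow_left b).dvd_of_dvd_mul_right
      ((pow_dvd_pow_of_dvd (d.gcd_dvd_left u) b).trans hd_dvd)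
  have hdv : d.gcd v ^ b ∣ v :=
    ((huv.symm.coprime_dvd_left (d.gcd_dvd_right v)).pow_left b).dvd_of_dvd_mul_left
      ((pow_dvd_pow_of_dvd (d.gcd_dvd_left v) b).trans hd_dvd)
  calc d = d.gcd u * d.gcd v := hsplit.symm
    _ ≤ powDvdRoot b u * powDvdRoot b v :=
      Nat.mul_le_mul (le_powDvdRoot hb hu (Nat.gcd_pos_of_pos_left u hd₀) hdu)
        (le_powDvdRoot hb hv (Nat.gcd_pos_of_pos_left v hd₀) hdv)

theorem powDvdRoot_prime_pow (hb : b ≠ 0) {p : ℕ} (hp : p.Prime) (e : ℕ) :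
    powDvdRoot b (p ^ e) = p ^ (e / b) := by
  have hpe : 0 < p ^ e := pow_pos hp.pos e
  refine le_antisymm ?_ (le_powDvdRoot hb hpe (pow_pos hp.pos _)
    (by rw [← pow_mul]; exact pow_dvd_pow p (Nat.div_mul_le_self e b)))
  obtain ⟨-, hdvd⟩ := powDvdRoot_spec hb hpe
  obtain ⟨i, -, hi⟩ := (Nat.dvd_prime_pow hp).1 ((dvd_pow_self _ hb).trans hdvd)
  rw [hi, ← pow_mul, Nat.pow_dvd_pow_iff_le_right hp.one_lt] at hdvd
  rw [hi]
  exact Nat.pow_le_pow_right hp.pos ((Nat.le_div_iff_mul_le (Nat.pos_of_ne_zero hb)).2 hdvd)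

end powDvdRoot

theorem sum_Icc_gcd_eq_sum_zmod {R : Type*} [AddCommMonoid R] (g : ℕ → R) (n : ℕ) [NeZero n] :
    ∑ j ∈ Icc 1 n, g (j.gcd n) = ∑ x : ZMod n, g (x.val.gcd n) := by
  obtain ⟨k, rfl⟩ : ∃ k, n = k + 1 := Nat.exists_eq_succ_of_ne_zero (NeZero.ne n)
  -- `j = k + 1` and `j = 0` contribute the same term `g (k + 1)`.
  rw [← Ico_add_one_right_eq_Icc, sum_Ico_eq_sum_range, Nat.add_sub_cancel, sum_range_succ]
  refine Eq.trans ?_ (Fin.sum_univ_eq_sum_range (fun j => g (j.gcd (k + 1))) (k + 1)).symm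
  rw [sum_range_succ', Nat.gcd_zero_left]
  simp only [add_comm 1, Nat.gcd_self]

theorem sum_zmod_gcd_mul {R : Type*} [CommSemiring R] (f : ℕ → R)
    (hf : ∀ u v, 0 < u → 0 < v → u.Coprime v → f (u * v) = f u * f v)
    {m n : ℕ} [NeZero m] [NeZero n] (hmn : m.Coprime n) :
    ∑ x : ZMod (m * n), f (x.val.gcd (m * n)) =
      (∑ x : ZMod m, f (x.val.gcd m)) * ∑ x : ZMod n, f (x.val.gcd n) := by
  rw [Fintype.sum_mul_sum, ← Fintype.sum_prod_type',
    ← (ZMod.chineseRemainder hmn).toEquiv.sum_comp]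
  refine Fintype.sum_congr _ _ fun x => ?_
  have hval {d : ℕ} [NeZero d] : (ZMod.cast x : ZMod d).val.gcd d = x.val.gcd d := by
    rw [ZMod.cast_eq_val, ZMod.val_natCast, ← Nat.gcd_rec, Nat.gcd_comm]
  have hm := NeZero.pos m
  have hn := NeZero.pos n
  rw [hmn.gcd_mul, hf _ _ (Nat.gcd_pos_of_pos_right _ hm) (Nat.gcd_pos_of_pos_right _ hn)
    ((hmn.coprime_dvd_left (Nat.gcd_dvd_right _ _)).coprime_dvd_right (Nat.gcd_dvd_right _ _))]
  have hcrt : (ZMod.chineseRemainder hmn).toEquiv x = (ZMod.cast x, ZMod.cast x) := by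
    show ZMod.cast x = _
    rw [ZMod.cast_eq_val, ZMod.cast_eq_val, ZMod.cast_eq_val]
    rfl
  rw [hcrt, hval, hval]

theorem sum_Icc_gcd_mul {R : Type*} [CommSemiring R] (f : ℕ → R)
    (hf : ∀ u v, 0 < u → 0 < v → u.Coprime v → f (u * v) = f u * f v)
    {m n : ℕ} [NeZero m] [NeZero n] (hmn : m.Coprime n) :
    ∑ j ∈ Icc 1 (m * n), f (j.gcd (m * n)) =
      (∑ j ∈ Icc 1 m, f (j.gcd m)) * ∑ j ∈ Icc 1 n, f (j.gcd n) := by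
  simp only [sum_Icc_gcd_eq_sum_zmod]
  exact sum_zmod_gcd_mul f hf hmn

noncomputable def ggcdSum (b n : ℕ) : ℚ := ∑ j ∈ Icc 1 n, 1 / (ggcd b j n : ℚ)

theorem Hb_eq_div_ggcdSum (b n : ℕ) : Hb b n = n / ggcdSum b n := rfl

theorem ggcdSum_mul {b : ℕ} (hb : b ≠ 0) {m n : ℕ} [NeZero m] [NeZero n] (hmn : m.Coprime n) :
    ggcdSum b (m * n) = ggcdSum b m * ggcdSum b n := by
  simp only [ggcdSum, ggcd_eq_powDvdRoot_gcd]
  refine sum_Icc_gcd_mul (fun d => 1 / (powDvdRoot b d : ℚ)) (fun u v hu hv huv => ?_) hmn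
  rw [powDvdRoot_mul hb hu hv huv, Nat.cast_mul, one_div_mul_one_div]

theorem sum_Icc_filter_dvd {R : Type*} [AddCommMonoid R] (f : ℕ → R) {d : ℕ} (hd : 0 < d)
    (m : ℕ) : ∑ x ∈ Icc 1 (d * m) with d ∣ x, f x = ∑ y ∈ Icc 1 m, f (d * y) := by
  refine (sum_nbij' (d * ·) (· / d) (fun y hy => ?_) (fun x hx => ?_) (fun y _ => ?_)
    (fun x hx => ?_) fun _ _ => rfl).symm
  · rw [mem_Icc] at hy
    rw [mem_filter, mem_Icc]
    exact ⟨⟨Nat.mul_pos hd hy.1, Nat.mul_le_mul_left d hy.2⟩, dvd_mul_right d y⟩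
  · rw [mem_filter, mem_Icc] at hx
    obtain ⟨⟨hx₁, hx₂⟩, c, rfl⟩ := hx
    rw [mem_Icc, Nat.mul_div_cancel_left c hd]
    exact ⟨Nat.pos_of_mul_pos_left hx₁, Nat.le_of_mul_le_mul_left hx₂ hd⟩
  · exact Nat.mul_div_cancel_left y hd
  · exact Nat.mul_div_cancel' (mem_filter.1 hx).2

section PrimePow

variable {b p : ℕ}

theorem ggcd_prime_pow_of_not_dvd (hb : b ≠ 0) (hp : p.Prime) {x : ℕ} (hx : ¬ p ^ b ∣ x)
    (a : ℕ) : ggcd b x (p ^ a) = 1 := by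
  obtain ⟨i, -, hi⟩ := (Nat.dvd_prime_pow hp).1 (x.gcd_dvd_right (p ^ a))
  have hib : i < b := by
    by_contra! h
    exact hx ((pow_dvd_pow p h).trans (hi ▸ x.gcd_dvd_left (p ^ a)))
  rw [ggcd_eq_powDvdRoot_gcd, hi, powDvdRoot_prime_pow hb hp, Nat.div_eq_of_lt hib, pow_zero]

theorem ggcd_prime_pow_mul_pow (hb : b ≠ 0) (hp : p.Prime) (y a : ℕ) :
    ggcd b (p ^ b * y) (p ^ (a + b)) = p * ggcd b y (p ^ a) := by
  obtain ⟨i, -, hi⟩ := (Nat.dvd_prime_pow hp).1 (y.gcd_dvd_right (p ^ a))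
  rw [ggcd_eq_powDvdRoot_gcd, ggcd_eq_powDvdRoot_gcd, pow_add, mul_comm (p ^ a), Nat.gcd_mul_left,
    hi, ← pow_add, powDvdRoot_prime_pow hb hp, powDvdRoot_prime_pow hb hp,
    Nat.add_div_left _ (Nat.pos_of_ne_zero hb), pow_succ']

theorem ggcdSum_prime_pow_add (hb : b ≠ 0) (hp : p.Prime) (a : ℕ) :
    ggcdSum b (p ^ (a + b)) = p ^ (a + b) - p ^ a + ggcdSum b (p ^ a) / p := by
  have hpb : 0 < p ^ b := pow_pos hp.pos b
  have hN : p ^ (a + b) = p ^ b * p ^ a := by rw [pow_add, mul_comm]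
  have hdvd_card : #{x ∈ Icc 1 (p ^ (a + b)) | p ^ b ∣ x} = p ^ a := by
    rw [card_eq_sum_ones, hN, sum_Icc_filter_dvd _ hpb, ← card_eq_sum_ones, Nat.card_Icc,
      Nat.add_sub_cancel]
  have hnot_card : (#{x ∈ Icc 1 (p ^ (a + b)) | ¬ p ^ b ∣ x} : ℚ) = p ^ (a + b) - p ^ a := by
    have := card_filter_add_card_filter_not (s := Icc 1 (p ^ (a + b))) (p ^ b ∣ ·)
    rw [hdvd_card, Nat.card_Icc, Nat.add_sub_cancel] at this
    rw [eq_sub_iff_add_eq']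
    exact_mod_cast this
  unfold ggcdSum
  rw [← sum_filter_add_sum_filter_not _ (p ^ b ∣ ·), add_comm]
  congr 1
  · rw [← hnot_card, card_eq_sum_ones, Nat.cast_sum, Nat.cast_one]
    refine sum_congr rfl fun x hx => ?_
    rw [ggcd_prime_pow_of_not_dvd hb hp (mem_filter.1 hx).2, Nat.cast_one, div_one]
  · rw [hN, sum_Icc_filter_dvd _ hpb, sum_div, ← hN]
    refine sum_congr rfl fun y _ => ?_
    rw [ggcd_prime_pow_mul_pow hb hp, Nat.cast_mul, div_div, mul_comm]

theorem ggcdSum_prime_pow_of_lt (hb : b ≠ 0) (hp : p.Prime) {j : ℕ} (hj : j < b) :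
    ggcdSum b (p ^ j) = p ^ j := by
  have hone : ∀ x ∈ Icc 1 (p ^ j), 1 / (ggcd b x (p ^ j) : ℚ) = 1 := fun x hx => by
    have hx_lt : x < p ^ b := (mem_Icc.1 hx).2.trans_lt (Nat.pow_lt_pow_right hp.one_lt hj)
    have hx_not_dvd : ¬ p ^ b ∣ x := fun h => hx_lt.not_ge (Nat.le_of_dvd (mem_Icc.1 hx).1 h)
    rw [ggcd_prime_pow_of_not_dvd hb hp hx_not_dvd, Nat.cast_one, div_one]
  rw [ggcdSum, sum_congr rfl hone, sum_const, Nat.card_Icc, Nat.add_sub_cancel, nsmul_one,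
    Nat.cast_pow]

theorem ggcdSum_prime_pow_mul (hb : b ≠ 0) (hp : p.Prime) (k : ℕ) {j : ℕ} (hj : j < b) :
    ggcdSum b (p ^ (k * b + j)) * (p ^ k * (p ^ (b + 1) - 1)) =
      p ^ j * (p ^ (k * (b + 1)) * (p ^ (b + 1) - p) + p - 1) := by
  induction k with
  | zero =>
    rw [zero_mul, zero_add, ggcdSum_prime_pow_of_lt hb hp hj]
    ring
  | succ k ih =>
    rw [show (k + 1) * b + j = k * b + j + b by ring, ggcdSum_prime_pow_add hb hp]
    have hshift : ggcdSum b (p ^ (k * b + j)) / p * p ^ (k + 1) =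
        ggcdSum b (p ^ (k * b + j)) * p ^ k := by
      have hp₀ : (p : ℚ) ≠ 0 := Nat.cast_ne_zero.2 hp.ne_zero
      rw [pow_succ]
      field_simp
    linear_combination ih + ((p : ℚ) ^ (b + 1) - 1) * hshift

theorem Hb_prime_pow (hb : b ≠ 0) (hp : p.Prime) (k : ℕ) {j : ℕ} (hj : j < b) :
    Hb b (p ^ (k * b + j)) =
      ((p : ℚ) ^ (k * (b + 1)) * ((p : ℚ) ^ (b + 1) - 1)) /
        ((p : ℚ) ^ (k * (b + 1)) * ((p : ℚ) ^ (b + 1) - (p : ℚ)) + (p : ℚ) - 1) := by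
  have hp₁ : (1 : ℚ) < p := by exact_mod_cast hp.one_lt
  have hpX : (p : ℚ) < p ^ (b + 1) := by
    simpa using pow_lt_pow_right₀ hp₁ (show 1 < b + 1 by omega)
  have hD : 0 < (p : ℚ) ^ (k * (b + 1)) * (p ^ (b + 1) - p) + p - 1 := by
    have := mul_pos (pow_pos (zero_lt_one.trans hp₁) (k * (b + 1))) (sub_pos.2 hpX)
    linarith
  have hS := ggcdSum_prime_pow_mul hb hp k hj
  have hS₀ : ggcdSum b (p ^ (k * b + j)) ≠ 0 := by
    rintro h
    rw [h, zero_mul] at hS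
    exact (mul_pos (pow_pos (zero_lt_one.trans hp₁) j) hD).ne hS
  rw [Hb_eq_div_ggcdSum, div_eq_div_iff hS₀ hD.ne']
  push_cast
  linear_combination (-(p : ℚ) ^ (k * b)) * hS

end PrimePow

theorem Hb_multiplicative_and_prime_pow (b : ℕ) (hb : 2 ≤ b) :
    (∀ m n : ℕ, 1 ≤ m → 1 ≤ n → Nat.Coprime m n →
      Hb b (m * n) = Hb b m * Hb b n) ∧
    (∀ p : ℕ, p.Prime → ∀ k : ℕ, 1 ≤ k → ∀ j : ℕ, j ≤ b - 1 →
      Hb b (p ^ (k * b + j)) =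
        ((p : ℚ) ^ (k * (b + 1)) * ((p : ℚ) ^ (b + 1) - 1)) /
          ((p : ℚ) ^ (k * (b + 1)) * ((p : ℚ) ^ (b + 1) - (p : ℚ)) + (p : ℚ) - 1)) ∧
    (∀ p : ℕ, p.Prime → ∀ j : ℕ, j ≤ b - 1 → Hb b (p ^ j) = 1) := by
  have hb₀ : b ≠ 0 := by omega
  refine ⟨fun m n hm hn hmn => ?_, fun p hp k _ j hj => Hb_prime_pow hb₀ hp k (by omega),
    fun p hp j hj => ?_⟩
  · have : NeZero m := ⟨by omega⟩
    have : NeZero n := ⟨by omega⟩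
    rw [Hb_eq_div_ggcdSum, Hb_eq_div_ggcdSum, Hb_eq_div_ggcdSum, ggcdSum_mul hb₀ hmn,
      Nat.cast_mul, div_mul_div_comm]
  · rw [Hb_eq_div_ggcdSum, ggcdSum_prime_pow_of_lt hb₀ hp (by omega), Nat.cast_pow]
    exact div_self (pow_ne_zero j (Nat.cast_ne_zero.2 hp.ne_zero))
end

section
/- For k ≥ 2 and any arithmetic functions f, r with f = 1 * r (Dirichlet convolution with the constant function 1), Σ_{n_1,…,n_k ≤ x} f((n_1,…,n_k)_b) = Σ_{d ≤ x^{1/b}} (f * μ)(d) · ⌊x/d^b⌋^k, where (n_1,…,n_k)_b := max{d ≥ 1 : d^b | n_i for all i}. -/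
/-- The generalized gcd of `k` positive integers:
the largest `d ≥ 1` with `d^b ∣ nᵢ` for all `i`. -/
noncomputable def ggcdk (b k : ℕ) (n : Fin k → ℕ) : ℕ :=
  sSup {d : ℕ | 0 < d ∧ ∀ i, d ^ b ∣ n i}

/-! For positive `nᵢ`, the divisors of `(n₁,…,n_k)_b` are exactly the `d` with `d^b ∣ nᵢ` for
all `i`, because such `d` are closed under `lcm`. Hence `f((n)_b) = ∑_{d^b ∣ nᵢ ∀ i} r d`;
exchanging the sums, each `d` is counted `⌊x/d^b⌋^k` times, and Möbius inversion gives
`r = f * μ`. -/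

open Finset

section ggcdk

variable {b k : ℕ} {n : Fin k → ℕ}

lemma bddAbove_setOf_pow_dvd (hb : b ≠ 0) (i : Fin k) (hi : 0 < n i) :
    BddAbove {d : ℕ | 0 < d ∧ ∀ i, d ^ b ∣ n i} :=
  ⟨n i, fun d hd => (Nat.le_self_pow hb d).trans (Nat.le_of_dvd hi (hd.2 i))⟩

lemma ggcdk_pos_and_pow_dvd (hb : b ≠ 0) (hk : k ≠ 0) (hn : ∀ i, 0 < n i) :
    0 < ggcdk b k n ∧ ∀ i, ggcdk b k n ^ b ∣ n i :=
  Nat.sSup_mem (s := {d : ℕ | 0 < d ∧ ∀ i, d ^ b ∣ n i}) ⟨1, one_pos, fun i => by simp⟩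
    (bddAbove_setOf_pow_dvd hb ⟨0, Nat.pos_of_ne_zero hk⟩ (hn _))

lemma dvd_ggcdk_iff (hb : b ≠ 0) (hk : k ≠ 0) (hn : ∀ i, 0 < n i) {d : ℕ} :
    d ∣ ggcdk b k n ↔ ∀ i, d ^ b ∣ n i := by
  obtain ⟨hg, hgn⟩ := ggcdk_pos_and_pow_dvd hb hk hn
  refine ⟨fun hd i => (pow_dvd_pow_of_dvd hd b).trans (hgn i), fun hd => ?_⟩
  have i₀ : Fin k := ⟨0, Nat.pos_of_ne_zero hk⟩
  have hd₀ : 0 < d := (pow_pos_iff hb).mp (Nat.pos_of_dvd_of_pos (hd i₀) (hn i₀))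
  -- `lcm d g` is again admissible, so maximality of `g` forces `lcm d g = g`.
  have hlcm : Nat.lcm d (ggcdk b k n) ≤ ggcdk b k n :=
    le_csSup (bddAbove_setOf_pow_dvd hb i₀ (hn i₀))
      ⟨Nat.lcm_pos hd₀ hg, fun i => Nat.pow_lcm_pow ▸ Nat.lcm_dvd (hd i) (hgn i)⟩
  have heq : Nat.lcm d (ggcdk b k n) = ggcdk b k n :=
    le_antisymm hlcm (Nat.le_of_dvd (Nat.lcm_pos hd₀ hg) (Nat.dvd_lcm_right _ _))
  exact heq ▸ Nat.dvd_lcm_left _ _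

lemma Nat.le_floor_rpow_one_div_iff {x : ℝ} (hx : 0 ≤ x) (hb : b ≠ 0) {d : ℕ} :
    d ≤ ⌊x ^ ((1 : ℝ) / b)⌋₊ ↔ d ^ b ≤ ⌊x⌋₊ := by
  have hb' : (0 : ℝ) < b := by positivity
  rw [Nat.le_floor_iff (by positivity), Nat.le_floor_iff hx, one_div,
    Real.le_rpow_inv_iff_of_pos d.cast_nonneg hx hb', Real.rpow_natCast, Nat.cast_pow]

lemma divisors_ggcdk_eq_filter {x : ℝ} (hx : 0 ≤ x) (hb : b ≠ 0) (hk : k ≠ 0)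
    (hn : ∀ i, n i ∈ Icc 1 ⌊x⌋₊) :
    (ggcdk b k n).divisors = {d ∈ Icc 1 ⌊x ^ ((1 : ℝ) / b)⌋₊ | ∀ i, d ^ b ∣ n i} := by
  have hn₀ : ∀ i, 0 < n i := fun i => (mem_Icc.mp (hn i)).1
  have i₀ : Fin k := ⟨0, Nat.pos_of_ne_zero hk⟩
  have hg := (ggcdk_pos_and_pow_dvd hb hk hn₀).1
  ext d
  rw [Nat.mem_divisors, mem_filter, mem_Icc, Nat.le_floor_rpow_one_div_iff hx hb,
    ← dvd_ggcdk_iff hb hk hn₀]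
  refine ⟨fun ⟨hd, _⟩ => ⟨⟨Nat.pos_of_dvd_of_pos hd hg, ?_⟩, hd⟩, fun ⟨_, hd⟩ => ⟨hd, hg.ne'⟩⟩
  exact (Nat.le_of_dvd (hn₀ i₀) ((dvd_ggcdk_iff hb hk hn₀).mp hd i₀)).trans (mem_Icc.mp (hn i₀)).2

end ggcdk

lemma card_filter_piFinset_Icc_dvd (k N m : ℕ) :
    #{n ∈ Fintype.piFinset fun _ : Fin k => Icc 1 N | ∀ i, m ∣ n i} = (N / m) ^ k := by
  have hfilter : {n ∈ Fintype.piFinset fun _ : Fin k => Icc 1 N | ∀ i, m ∣ n i} =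
      Fintype.piFinset fun _ : Fin k => {a ∈ Icc 1 N | m ∣ a} := by
    ext n
    simp only [mem_filter, Fintype.mem_piFinset, forall_and]
  rw [hfilter, Fintype.card_piFinset, prod_const, card_univ, Fintype.card_fin,
    ← Nat.Ioc_filter_dvd_card_eq_div]
  rfl

lemma sum_divisors_mul_moebius_eq {R : Type*} [CommRing R] {f r : ℕ → R}
    (hfr : ∀ n : ℕ, 0 < n → f n = ∑ d ∈ n.divisors, r d) {n : ℕ} (hn : 0 < n) :
    ∑ e ∈ n.divisors, f e * (ArithmeticFunction.moebius (n / e) : R) = r n := by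
  have h := ArithmeticFunction.sum_eq_iff_sum_mul_moebius_eq.mp (fun m hm => (hfr m hm).symm) n hn
  rw [Nat.sum_divisorsAntidiagonal' (f := fun a c => (ArithmeticFunction.moebius a : R) * f c)]
    at h
  simpa only [mul_comm] using h

theorem sum_f_ggcdk (b k : ℕ) (hb : 1 ≤ b) (hk : 2 ≤ k) (x : ℝ) (hx : 1 ≤ x)
    (f r : ℕ → ℝ) (hfr : ∀ n : ℕ, 0 < n → f n = ∑ d ∈ n.divisors, r d) :
    ∑ n ∈ Fintype.piFinset (fun _ : Fin k => Finset.Icc 1 ⌊x⌋₊), f (ggcdk b k n) =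
      ∑ d ∈ Finset.Icc 1 ⌊x ^ ((1 : ℝ) / b)⌋₊,
        (∑ e ∈ d.divisors, f e * (ArithmeticFunction.moebius (d / e) : ℝ)) *
          (⌊x / (d : ℝ) ^ b⌋₊ : ℝ) ^ k := by
  have hx₀ : 0 ≤ x := by linarith
  have hb₀ : b ≠ 0 := by omega
  have hk₀ : k ≠ 0 := by omega
  have hexpand : ∀ n ∈ Fintype.piFinset (fun _ : Fin k => Icc 1 ⌊x⌋₊), f (ggcdk b k n) =
      ∑ d ∈ {d ∈ Icc 1 ⌊x ^ ((1 : ℝ) / b)⌋₊ | ∀ i, d ^ b ∣ n i}, r d := by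
    intro n hn
    have hn' := Fintype.mem_piFinset.mp hn
    rw [hfr _ (ggcdk_pos_and_pow_dvd hb₀ hk₀ fun i => (mem_Icc.mp (hn' i)).1).1,
      divisors_ggcdk_eq_filter hx₀ hb₀ hk₀ hn']
  rw [sum_congr rfl hexpand, sum_comm' (s' := fun d =>
    {n ∈ Fintype.piFinset fun _ : Fin k => Icc 1 ⌊x⌋₊ | ∀ i, d ^ b ∣ n i}) (by
      intro n d; simp only [mem_filter]; tauto)]
  refine sum_congr rfl fun d hd => ?_
  rw [sum_const, card_filter_piFinset_Icc_dvd, nsmul_eq_mul,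
    sum_divisors_mul_moebius_eq hfr (mem_Icc.mp hd).1, ← Nat.cast_pow, ← Nat.cast_pow,
    Nat.floor_div_natCast, mul_comm]
end
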